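/- arXiv:math/0108136 — 4 statements merged into one kernel-verified Lean document; each statement's English description precedes it below -/
import Mathlib

section
/- Let ∂_1,...,∂_N be the linear operators on the twisted plane algebra ℝ_q^N determined by ∂_s(1)=0 and the commutation rule ∂_s(x^a f) = δ^a_s f + q(a,s) x^a ∂_s(f). Then the Laplacian Δ = Σ_j ∂_j ∂_{j'} satisfies Δ∘M_c = M_c∘Δ + 2N·id + 4 Σ_j M_{x^j}∘∂_j, where M_c denotes left multiplication by c = Σ_a x^a x^{a'}. -/
/-- The defining relations of the twisted quantum Euclidean plane:
`x^a x^b = q(a,b) x^b x^a`. -/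
def twistRel {N : ℕ} (q : Fin N → Fin N → ℂ) :
    FreeAlgebra ℂ (Fin N) → FreeAlgebra ℂ (Fin N) → Prop :=
  fun u v => ∃ a b : Fin N,
    u = FreeAlgebra.ι ℂ a * FreeAlgebra.ι ℂ b ∧
    v = q a b • (FreeAlgebra.ι ℂ b * FreeAlgebra.ι ℂ a)

/-- The twisted quantum Euclidean plane `ℝ_q^N`. -/
abbrev TwistedPlane {N : ℕ} (q : Fin N → Fin N → ℂ) := RingQuot (twistRel q)

/-- The coordinate generators of the twisted plane. -/
def X {N : ℕ} (q : Fin N → Fin N → ℂ) (a : Fin N) : TwistedPlane q :=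
  RingQuot.mkAlgHom ℂ (twistRel q) (FreeAlgebra.ι ℂ a)

/-- The central element `c = Σ_a x^a x^{a'}` (with `g_{ab} = δ_{a,b'}`,
primed index `a' = Fin.rev a`). -/
def cElem {N : ℕ} (q : Fin N → Fin N → ℂ) : TwistedPlane q :=
  ∑ a, X q a * X q (Fin.rev a)

/-- for the partial derivatives `∂_s` on `ℝ_q^N` determined by
`∂_s(1) = 0` and `∂_s(x^a f) = δ^a_s f + q(a,s) x^a ∂_s(f)`, the Laplacian
`Δ = Σ_j ∂_j ∂_{j'}` satisfies `Δ∘M_c = M_c∘Δ + 2N·id + 4 Σ_j M_{x^j}∘∂_j`,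
where `M_c` is left multiplication by `c = Σ_a x^a x^{a'}`. -/
theorem laplacian_c_commutation {N : ℕ} (q : Fin N → Fin N → ℂ)
    (h1 : ∀ a, q a a = 1)
    (h2 : ∀ a b, q a b * q b a = 1)
    (h3 : ∀ a b, q a b * q a (Fin.rev b) = 1)
    (h4 : ∀ a b, q a b = q (Fin.rev a) (Fin.rev b))
    (D : Fin N → Module.End ℂ (TwistedPlane q))
    (hD1 : ∀ s, D s 1 = 0)
    (hD2 : ∀ s a f, D s (X q a * f) =
      (if a = s then f else 0) + q a s • (X q a * D s f)) :
    ∀ f : TwistedPlane q,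
      (∑ j, D j * D (Fin.rev j)) (cElem q * f)
        = cElem q * (∑ j, D j * D (Fin.rev j)) f
          + ((2 * N : ℂ)) • f + (4 : ℂ) • ∑ j, X q j * D j f := by
  have hrev1 : ∀ s : Fin N, q (Fin.rev s) s = 1 := by
    intro s
    have := h3 (Fin.rev s) (Fin.rev s)
    rwa [h1, one_mul, Fin.rev_rev] at this
  have hprod : ∀ a s : Fin N, q a s * q (Fin.rev a) s = 1 := by
    intro a s
    have h := h4 (Fin.rev a) s
    rw [Fin.rev_rev] at h
    rw [h]
    exact h3 a s
  have key : ∀ s (f : TwistedPlane q), D s (cElem q * f)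
      = (2 : ℂ) • (X q (Fin.rev s) * f) + cElem q * D s f := by
    intro s f
    have hiff : ∀ a : Fin N, (Fin.rev a = s) = (a = Fin.rev s) := by
      intro a
      exact propext ⟨fun h => by rw [← h, Fin.rev_rev], fun h => by rw [h, Fin.rev_rev]⟩
    rw [cElem, Finset.sum_mul]
    simp_rw [mul_assoc]
    rw [map_sum]
    simp_rw [hD2]
    simp_rw [mul_add, smul_add, hiff, mul_ite, mul_zero, smul_ite, smul_zero]
    rw [Finset.sum_add_distrib, Finset.sum_add_distrib]
    rw [Finset.sum_ite_eq' Finset.univ s (fun a => X q (Fin.rev a) * f)]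
    rw [Finset.sum_ite_eq' Finset.univ (Fin.rev s)
      (fun a => q a s • (X q a * f))]
    simp only [Finset.mem_univ, if_pos, Fin.rev_rev, hrev1, one_smul]
    simp_rw [mul_smul_comm, smul_smul, hprod, one_smul]
    rw [Finset.sum_mul]
    simp_rw [mul_assoc]
    module
  intro f
  simp only [LinearMap.sum_apply, Module.End.mul_apply]
  have step : ∀ j : Fin N, D j (D (Fin.rev j) (cElem q * f))
      = (2 : ℂ) • f + (2 : ℂ) • (X q j * D j f)
        + (2 : ℂ) • (X q (Fin.rev j) * D (Fin.rev j) f)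
        + cElem q * D j (D (Fin.rev j) f) := by
    intro j
    rw [key (Fin.rev j) f, Fin.rev_rev, map_add, map_smul, hD2, key j, if_pos rfl, h1,
      one_smul]
    module
  simp_rw [step]
  rw [Finset.sum_add_distrib, Finset.sum_add_distrib, Finset.sum_add_distrib,
    Finset.sum_const, Finset.card_univ, Fintype.card_fin, ← Finset.smul_sum,
    ← Finset.smul_sum, ← Finset.mul_sum]
  have hre : ∑ j, X q (Fin.rev j) * D (Fin.rev j) f = ∑ j, X q j * D j f := by
    exact Fintype.sum_equiv (Fin.revPerm) _ _ (fun j => rfl)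
  rw [hre]
  have hN : (N : ℕ) • ((2:ℂ) • f) = ((2 * N : ℂ)) • f := by
    rw [← Nat.cast_smul_eq_nsmul ℂ, smul_smul]
    ring_nf
  rw [hN]
  module
end

section
/- On the twisted plane ℝ_q^{N}, for every n > 0 and every monomial x^{i_1}⋯x^{i_{2n}} of degree 2n, one has Δ^{n+1}(c · x^{i_1}⋯x^{i_{2n}}) = 2(n+1)(N+2n) · Δ^n(x^{i_1}⋯x^{i_{2n}}), where c = Σ_a x^a x^{a'} and Δ = Σ_j ∂_j ∂_{j'}. -/
namespace TwistedAux

variable {N : ℕ} (q : Fin N → Fin N → ℂ)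

lemma X_comm (a b : Fin N) : X q a * X q b = q a b • (X q b * X q a) := by
  have := RingQuot.mkAlgHom_rel ℂ
    (s := twistRel q) (x := FreeAlgebra.ι ℂ a * FreeAlgebra.ι ℂ b)
    (y := q a b • (FreeAlgebra.ι ℂ b * FreeAlgebra.ι ℂ a)) ⟨a, b, rfl, rfl⟩
  simpa [X, map_mul, map_smul] using this

/-- Span of monomials of degree `m` (empty for negative `m`). -/
def Qdeg (m : ℤ) : Submodule ℂ (TwistedPlane q) :=
  Submodule.span ℂ {f | ∃ l : List (Fin N), (l.length : ℤ) = m ∧ f = (l.map (X q)).prod}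

lemma Qdeg_neg {m : ℤ} (hm : m < 0) {f} (hf : f ∈ Qdeg q m) : f = 0 := by
  have : {f : TwistedPlane q | ∃ l : List (Fin N), (l.length : ℤ) = m ∧ f = (l.map (X q)).prod}
      = (∅ : Set (TwistedPlane q)) := by
    ext g; simp only [Set.mem_setOf_eq, Set.mem_empty_iff_false, iff_false, not_exists]
    rintro l ⟨hl, -⟩; omega
  rw [Qdeg, this, Submodule.span_empty, Submodule.mem_bot] at hf
  exact hf

lemma X_mul_mem {m : ℤ} (a : Fin N) {f} (hf : f ∈ Qdeg q m) :
    X q a * f ∈ Qdeg q (m + 1) := by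
  induction hf using Submodule.span_induction with
  | mem g hg =>
    obtain ⟨l, hl, rfl⟩ := hg
    exact Submodule.subset_span ⟨a :: l, by simp only [List.length_cons]; push_cast; omega, by simp⟩
  | zero => simp only [mul_zero]; exact (Qdeg q (m + 1)).zero_mem
  | add x y _ _ hx hy => rw [mul_add]; exact add_mem hx hy
  | smul c x _ hx => rw [mul_smul_comm]; exact Submodule.smul_mem _ _ hx

variable (D : Fin N → Module.End ℂ (TwistedPlane q))
variable (hD1 : ∀ s, D s 1 = 0)
variable (hD2 : ∀ s a f, D s (X q a * f) =
      (if a = s then f else 0) + q a s • (X q a * D s f))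

include hD1 hD2 in
lemma D_monomial_mem (s : Fin N) :
    ∀ l : List (Fin N), D s ((l.map (X q)).prod) ∈ Qdeg q ((l.length : ℤ) - 1) := by
  intro l; induction l with
  | nil => simp only [List.map_nil, List.prod_nil, hD1]; exact (Qdeg q _).zero_mem
  | cons a l ih =>
    rw [List.map_cons, List.prod_cons, hD2]
    have hidx : ((a :: l).length : ℤ) - 1 = (l.length : ℤ) := by simp only [List.length_cons]; push_cast; ring
    rw [hidx]
    refine add_mem ?_ (Submodule.smul_mem _ _ ?_)
    · split
      · exact Submodule.subset_span ⟨l, rfl, rfl⟩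
      · exact (Qdeg q _).zero_mem
    · have := X_mul_mem q a (ih)
      rwa [sub_add_cancel] at this

include hD1 hD2 in
lemma D_mem (s : Fin N) {m : ℤ} {f} (hf : f ∈ Qdeg q m) : D s f ∈ Qdeg q (m - 1) := by
  induction hf using Submodule.span_induction with
  | mem g hg =>
    obtain ⟨l, hl, rfl⟩ := hg
    rw [← hl]; exact D_monomial_mem q D hD1 hD2 s l
  | zero => rw [map_zero]; exact (Qdeg q _).zero_mem
  | add x y _ _ hx hy => rw [map_add]; exact add_mem hx hy
  | smul c x _ hx => rw [map_smul]; exact Submodule.smul_mem _ _ hx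

variable (h1 : ∀ a, q a a = 1)
variable (h2 : ∀ a b, q a b * q b a = 1)
variable (h3 : ∀ a b, q a b * q a (Fin.rev b) = 1)
variable (h4 : ∀ a b, q a b = q (Fin.rev a) (Fin.rev b))

include h1 h3 in
lemma q_rev_self (s : Fin N) : q s (Fin.rev s) = 1 := by
  have := h3 s s; rw [h1] at this; simpa using this

include h1 h2 h3 in
lemma q_rev_self' (s : Fin N) : q (Fin.rev s) s = 1 := by
  have := h2 s (Fin.rev s); rw [q_rev_self q h1 h3] at this; simpa using this

include h3 h4 in
lemma q_mul_rev (a s : Fin N) : q a s * q (Fin.rev a) s = 1 := by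
  have h : q (Fin.rev a) s = q a (Fin.rev s) := by
    rw [h4 (Fin.rev a) s, Fin.rev_rev]
  rw [h]; exact h3 a s

include hD2 h2 in
lemma eul_X (a : Fin N) (f : TwistedPlane q) :
    (∑ s, X q s * D s (X q a * f)) = X q a * f + X q a * ∑ s, X q s * D s f := by
  have step : ∀ s, X q s * D s (X q a * f)
      = (if a = s then X q s * f else 0) + X q a * (X q s * D s f) := by
    intro s
    rw [hD2, mul_add]
    congr 1
    · split <;> simp
    · rw [mul_smul_comm, ← mul_assoc, X_comm q s a, smul_mul_assoc, smul_smul,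
        h2, one_smul, mul_assoc]
  rw [Finset.sum_congr rfl fun s _ => step s, Finset.sum_add_distrib, ← Finset.mul_sum]
  congr 1
  simp

include hD1 hD2 h2 in
lemma eul_monomial : ∀ l : List (Fin N),
    (∑ s, X q s * D s ((l.map (X q)).prod)) = (l.length : ℂ) • (l.map (X q)).prod := by
  intro l; induction l with
  | nil => simp [hD1]
  | cons a l ih =>
    rw [List.map_cons, List.prod_cons, eul_X q D hD2 h2, ih, mul_smul_comm]
    simp only [List.length_cons]
    push_cast
    rw [add_smul, one_smul, add_comm]

include hD1 hD2 h2 in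
lemma eul_eq_smul {m : ℤ} {f} (hf : f ∈ Qdeg q m) :
    (∑ s, X q s * D s f) = (m : ℂ) • f := by
  induction hf using Submodule.span_induction with
  | mem g hg =>
    obtain ⟨l, hl, rfl⟩ := hg
    rw [eul_monomial q D hD1 hD2 h2 l, ← hl]
    push_cast
    rfl
  | zero => simp
  | add x y _ _ hx hy =>
    simp only [map_add, mul_add, Finset.sum_add_distrib, hx, hy, smul_add]
  | smul c x _ hx =>
    simp only [map_smul, mul_smul_comm, ← Finset.smul_sum, hx]
    rw [smul_comm]

include hD2 h1 h2 h3 h4 in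
lemma D_c (s : Fin N) (f : TwistedPlane q) :
    D s (cElem q * f) = (2:ℂ) • (X q (Fin.rev s) * f) + cElem q * D s f := by
  have hc : ∀ g : TwistedPlane q, cElem q * g = ∑ a, X q a * (X q (Fin.rev a) * g) := by
    intro g; rw [cElem, Finset.sum_mul]; simp [mul_assoc]
  have step : ∀ a, D s (X q a * (X q (Fin.rev a) * f))
      = (if a = s then X q (Fin.rev a) * f else 0)
        + ((if Fin.rev a = s then q a s • (X q a * f) else 0)
        + X q a * (X q (Fin.rev a) * D s f)) := by
    intro a
    rw [hD2 s a, hD2 s (Fin.rev a), mul_add, smul_add]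
    congr 1
    congr 1
    · split <;> simp
    · rw [mul_smul_comm, smul_smul, q_mul_rev q h3 h4, one_smul]
  rw [hc f, map_sum, Finset.sum_congr rfl fun a _ => step a, Finset.sum_add_distrib,
    Finset.sum_add_distrib, ← hc (D s f)]
  have e1 : (∑ a, if a = s then X q (Fin.rev a) * f else 0) = X q (Fin.rev s) * f := by
    simp
  have e2 : (∑ a, if Fin.rev a = s then q a s • (X q a * f) else 0)
      = X q (Fin.rev s) * f := by
    rw [Finset.sum_eq_single (Fin.rev s)]
    · rw [if_pos (Fin.rev_rev s), q_rev_self' q h1 h2 h3, one_smul]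
    · intro b _ hb
      rw [if_neg]
      intro hbs
      exact hb (by rw [← hbs, Fin.rev_rev])
    · simp
  rw [e1, e2, two_smul, add_assoc]

include hD2 h1 h2 h3 h4 in
lemma Delta_c (f : TwistedPlane q) :
    (∑ j, D j (D (Fin.rev j) (cElem q * f)))
      = (2 * N : ℂ) • f + (4:ℂ) • (∑ s, X q s * D s f)
        + cElem q * (∑ j, D j (D (Fin.rev j) f)) := by
  have step : ∀ j, D j (D (Fin.rev j) (cElem q * f))
      = (2:ℂ) • f + ((2:ℂ) • (X q j * D j f)
        + ((2:ℂ) • (X q (Fin.rev j) * D (Fin.rev j) f)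
        + cElem q * D j (D (Fin.rev j) f))) := by
    intro j
    rw [D_c q D hD2 h1 h2 h3 h4 (Fin.rev j) f, Fin.rev_rev, map_add, map_smul,
      hD2 j j, D_c q D hD2 h1 h2 h3 h4 j (D (Fin.rev j) f), h1, one_smul,
      if_pos rfl, smul_add, add_assoc]
  rw [Finset.sum_congr rfl fun j _ => step j, Finset.sum_add_distrib,
    Finset.sum_add_distrib, Finset.sum_add_distrib]
  have e1 : (∑ _j : Fin N, (2:ℂ) • f) = (2 * N : ℂ) • f := by
    rw [Finset.sum_const, Finset.card_univ, Fintype.card_fin,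
      ← Nat.cast_smul_eq_nsmul ℂ, smul_smul]
    ring_nf
  have e2 : (∑ j, (2:ℂ) • (X q j * D j f)) = (2:ℂ) • ∑ s, X q s * D s f :=
    (Finset.smul_sum).symm
  have e3 : (∑ j, (2:ℂ) • (X q (Fin.rev j) * D (Fin.rev j) f))
      = (2:ℂ) • ∑ s, X q s * D s f := by
    rw [← Finset.smul_sum]
    congr 1
    exact Fintype.sum_bijective Fin.rev Fin.rev_bijective _ _ (fun x => rfl)
  have e4 : (∑ j, cElem q * D j (D (Fin.rev j) f))
      = cElem q * ∑ j, D j (D (Fin.rev j) f) := (Finset.mul_sum _ _ _).symm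
  rw [e1, e2, e3, e4, ← add_assoc, ← add_assoc, add_assoc ((2*N:ℂ) • f), ← add_smul]
  norm_num

include hD1 hD2 h1 h2 h3 h4 in
lemma Delta_c_deg {m : ℤ} {f} (hf : f ∈ Qdeg q m) :
    (∑ j, D j (D (Fin.rev j) (cElem q * f)))
      = cElem q * (∑ j, D j (D (Fin.rev j) f)) + ((2 * N + 4 * m : ℂ)) • f := by
  rw [Delta_c q D hD2 h1 h2 h3 h4 f, eul_eq_smul q D hD1 hD2 h2 hf, smul_smul, ← add_smul, add_comm]

lemma Dl_apply (f : TwistedPlane q) :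
    (∑ j, D j * D (Fin.rev j)) f = ∑ j, D j (D (Fin.rev j) f) := by
  rw [LinearMap.sum_apply]
  rfl

include hD1 hD2 in
lemma Dl_mem {m : ℤ} {f} (hf : f ∈ Qdeg q m) :
    (∑ j, D j * D (Fin.rev j)) f ∈ Qdeg q (m - 2) := by
  rw [Dl_apply]
  refine Submodule.sum_mem _ fun j _ => ?_
  have := D_mem q D hD1 hD2 j (D_mem q D hD1 hD2 (Fin.rev j) hf)
  rwa [show m - 1 - 1 = m - 2 by ring] at this

include hD1 hD2 in
lemma Dl_pow_mem (k : ℕ) : ∀ {m : ℤ} {f}, f ∈ Qdeg q m →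
    ((∑ j, D j * D (Fin.rev j)) ^ k) f ∈ Qdeg q (m - 2 * k) := by
  induction k with
  | zero => intro m f hf; simpa using hf
  | succ k ih =>
    intro m f hf
    rw [pow_succ', Module.End.mul_apply]
    have := Dl_mem q D hD1 hD2 (ih hf)
    rwa [show m - 2 * (k:ℤ) - 2 = m - 2 * ((k:ℕ)+1 : ℕ) by push_cast; ring] at this

include hD1 hD2 h1 h2 h3 h4 in
lemma key (k : ℕ) : ∀ (m : ℤ) (f : TwistedPlane q), f ∈ Qdeg q m →
    ((∑ j, D j * D (Fin.rev j)) ^ (k+1)) (cElem q * f)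
      = cElem q * (((∑ j, D j * D (Fin.rev j)) ^ (k+1)) f)
        + (((k:ℂ)+1) * (2*N + 4*m - 4*k)) • (((∑ j, D j * D (Fin.rev j)) ^ k) f) := by
  induction k with
  | zero =>
    intro m f hf
    simp only [zero_add, pow_one, pow_zero, Module.End.one_apply, Nat.cast_zero]
    rw [Dl_apply, Delta_c_deg q D hD1 hD2 h1 h2 h3 h4 hf, Dl_apply]
    norm_num
  | succ k ih =>
    intro m f hf
    have hDlcf : (∑ j, D j * D (Fin.rev j)) (cElem q * f)
        = cElem q * ((∑ j, D j * D (Fin.rev j)) f) + ((2 * N + 4 * m : ℂ)) • f := by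
      rw [Dl_apply, Delta_c_deg q D hD1 hD2 h1 h2 h3 h4 hf, Dl_apply]
    rw [pow_succ, Module.End.mul_apply, hDlcf, map_add, map_smul,
      ih (m - 2) _ (Dl_mem q D hD1 hD2 hf), ← Module.End.mul_apply _ (∑ j, D j * D (Fin.rev j)),
      ← pow_succ, ← Module.End.mul_apply ((∑ j, D j * D (Fin.rev j)) ^ k), ← pow_succ,
      add_assoc, ← add_smul]
    congr 2
    push_cast
    ring

end TwistedAux

/-- on the twisted plane `ℝ_q^N`, for every `n > 0` and every
monomial `x^{i_1}⋯x^{i_{2n}}` of degree `2n`,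
`Δ^{n+1}(c·x^{i_1}⋯x^{i_{2n}}) = 2(n+1)(N+2n)·Δ^n(x^{i_1}⋯x^{i_{2n}})`,
where `c = Σ_a x^a x^{a'}` and `Δ = Σ_j ∂_j ∂_{j'}`. -/
theorem laplacian_power_c_monomial {N : ℕ} (q : Fin N → Fin N → ℂ)
    (h1 : ∀ a, q a a = 1)
    (h2 : ∀ a b, q a b * q b a = 1)
    (h3 : ∀ a b, q a b * q a (Fin.rev b) = 1)
    (h4 : ∀ a b, q a b = q (Fin.rev a) (Fin.rev b))
    (D : Fin N → Module.End ℂ (TwistedPlane q))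
    (hD1 : ∀ s, D s 1 = 0)
    (hD2 : ∀ s a f, D s (X q a * f) =
      (if a = s then f else 0) + q a s • (X q a * D s f)) :
    ∀ n : ℕ, 0 < n → ∀ i : Fin (2 * n) → Fin N,
      ((∑ j, D j * D (Fin.rev j)) ^ (n + 1))
          (cElem q * (List.ofFn fun k => X q (i k)).prod)
        = ((2 * (n + 1) * (N + 2 * n) : ℂ)) •
            ((∑ j, D j * D (Fin.rev j)) ^ n) ((List.ofFn fun k => X q (i k)).prod) := by
  intro n hn i
  have hf : (List.ofFn fun k => X q (i k)).prod ∈ TwistedAux.Qdeg q ((2 * n : ℕ) : ℤ) := by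
    refine Submodule.subset_span ⟨List.ofFn i, by simp, ?_⟩
    rw [List.map_ofFn]
    rfl
  have hkey := TwistedAux.key q D hD1 hD2 h1 h2 h3 h4 n _ _ hf
  have hzero : ((∑ j, D j * D (Fin.rev j)) ^ (n + 1)) ((List.ofFn fun k => X q (i k)).prod)
      = 0 := by
    refine TwistedAux.Qdeg_neg q (m := ((2 * n : ℕ) : ℤ) - 2 * ((n + 1 : ℕ) : ℤ))
      (by push_cast; omega) ?_
    exact TwistedAux.Dl_pow_mem q D hD1 hD2 (n + 1) hf
  rw [hkey, hzero, mul_zero, zero_add]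
  congr 1
  push_cast
  ring
end

section
/- On the twisted plane ℝ_q^N, the commutator of the Laplacian with left multiplication by a coordinate satisfies [Δ, x^ℓ] = 2 ∂_{ℓ'}, i.e. Δ(x^ℓ f) = x^ℓ Δ(f) + 2 ∂_{ℓ'}(f) for all f. -/
/-- on the twisted plane `ℝ_q^N`, the commutator of the
Laplacian `Δ = Σ_j ∂_j ∂_{j'}` with left multiplication by a coordinate
satisfies `[Δ, x^ℓ] = 2 ∂_{ℓ'}`, i.e. `Δ(x^ℓ f) = x^ℓ Δ(f) + 2 ∂_{ℓ'}(f)`. -/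
theorem laplacian_coordinate_commutator {N : ℕ} (q : Fin N → Fin N → ℂ)
    (h1 : ∀ a, q a a = 1)
    (h2 : ∀ a b, q a b * q b a = 1)
    (h3 : ∀ a b, q a b * q a (Fin.rev b) = 1)
    (h4 : ∀ a b, q a b = q (Fin.rev a) (Fin.rev b))
    (D : Fin N → Module.End ℂ (TwistedPlane q))
    (hD1 : ∀ s, D s 1 = 0)
    (hD2 : ∀ s a f, D s (X q a * f) =
      (if a = s then f else 0) + q a s • (X q a * D s f)) :
    ∀ (ℓ : Fin N) (f : TwistedPlane q),
      (∑ j, D j * D (Fin.rev j)) (X q ℓ * f)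
        = X q ℓ * (∑ j, D j * D (Fin.rev j)) f + (2 : ℂ) • D (Fin.rev ℓ) f := by
  intro ℓ f
  have hqℓ : q ℓ (Fin.rev ℓ) = 1 := by
    have := h3 ℓ ℓ; rw [h1] at this; simpa using this
  have key : ∀ j : Fin N, (D j) (D (Fin.rev j) (X q ℓ * f))
      = (if ℓ = Fin.rev j then D j f else 0)
        + (if ℓ = j then q ℓ (Fin.rev j) • D (Fin.rev j) f else 0)
        + X q ℓ * D j (D (Fin.rev j) f) := by
    intro j
    rw [hD2, map_add, map_smul, hD2, smul_add, smul_smul, mul_comm (q ℓ (Fin.rev j)), h3, one_smul,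
      apply_ite (D j), map_zero, smul_ite, smul_zero, add_assoc]
  simp only [LinearMap.sum_apply, Module.End.mul_apply, key]
  rw [Finset.sum_add_distrib, Finset.sum_add_distrib, ← Finset.mul_sum]
  have e1 : (∑ j : Fin N, if ℓ = Fin.rev j then D j f else 0) = D (Fin.rev ℓ) f := by
    rw [Finset.sum_eq_single (Fin.rev ℓ)]
    · simp
    · intro b _ hb
      rw [if_neg]
      intro h; exact hb (by rw [h, Fin.rev_rev])
    · simp
  have e2 : (∑ j : Fin N, if ℓ = j then q ℓ (Fin.rev j) • D (Fin.rev j) f else 0)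
      = D (Fin.rev ℓ) f := by
    rw [Finset.sum_eq_single ℓ]
    · simp [hqℓ]
    · intro b _ hb; rw [if_neg (fun h => hb h.symm)]
    · simp
  rw [e1, e2, two_smul]
  abel
end

section
/- Define the linear functional h_ℝ on the twisted plane ℝ_q^{N+1} by h_ℝ = 0 on odd-degree monomials and h_ℝ(x^{i_1}⋯x^{i_{2n}}) = λ_n Δ^n(x^{i_1}⋯x^{i_{2n}}) where λ_n = 1/(2^n n! (N+1)(N+3)⋯(N+2n−1)) (and Δ^n of a degree-2n monomial is a scalar). Then h_ℝ vanishes on the ideal (c−1)·ℝ_q^{N+1}, hence descends to a well-defined functional h on the twisted sphere 𝕊_q^N = ℝ_q^{N+1}/(c−1). -/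
/-! The twisted Leibniz rule gives `∂_s (c f) = 2 x^{s'} f + c ∂_s f`, hence
`Δ (c f) = 2 (N + 1) f + 4 E f + c Δ f`, where the Euler operator `E = Σ_s x^s ∂_s` multiplies
a homogeneous element of degree `n` by `n`. Iterating,
`Δ^{n+1} (c f) = 2 (n + 1) (N + 1 + 2n) Δ^n f` for `f` of degree `2n`; since
`λ_n = 2 (n + 1) (N + 1 + 2n) λ_{n+1}`, this says `h (c f) = h f` on even monomials, while on
odd monomials both sides vanish. The monomials span the plane. -/

namespace TwistedPlane

variable {N : ℕ}

section Monomials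

variable (q : Fin N → Fin N → ℂ)

theorem X_mul_X (a b : Fin N) : X q a * X q b = q a b • (X q b * X q a) := by
  have h := RingQuot.mkAlgHom_rel ℂ (show twistRel q _ _ from ⟨a, b, rfl, rfl⟩)
  simpa only [X, map_mul, map_smul] using h

def monomial {n : ℕ} (i : Fin n → Fin N) : TwistedPlane q :=
  (List.ofFn fun k => X q (i k)).prod

def homogeneous (n : ℕ) : Submodule ℂ (TwistedPlane q) :=
  Submodule.span ℂ (Set.range (monomial q : (Fin n → Fin N) → TwistedPlane q))

variable {q}

@[simp]
theorem monomial_zero (i : Fin 0 → Fin N) : monomial q i = 1 := rfl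

theorem monomial_cons {n : ℕ} (a : Fin N) (i : Fin n → Fin N) :
    monomial q (Fin.cons a i) = X q a * monomial q i := by
  simp [monomial, List.ofFn_succ]

theorem monomial_succ {n : ℕ} (i : Fin (n + 1) → Fin N) :
    monomial q i = X q (i 0) * monomial q (Fin.tail i) := by
  rw [← monomial_cons, Fin.cons_self_tail]

theorem monomial_mem_homogeneous {n : ℕ} (i : Fin n → Fin N) :
    monomial q i ∈ homogeneous q n :=
  Submodule.subset_span ⟨i, rfl⟩

theorem homogeneous_le {n : ℕ} {p : Submodule ℂ (TwistedPlane q)} :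
    homogeneous q n ≤ p ↔ ∀ i : Fin n → Fin N, monomial q i ∈ p := by
  rw [homogeneous, Submodule.span_le, Set.range_subset_iff]
  rfl

theorem X_mul_mem_homogeneous {n : ℕ} (a : Fin N) {x : TwistedPlane q}
    (hx : x ∈ homogeneous q n) : X q a * x ∈ homogeneous q (n + 1) := by
  refine homogeneous_le (p := (homogeneous q (n + 1)).comap (LinearMap.mulLeft ℂ (X q a)))
    |>.mpr (fun i => ?_) hx
  simpa [← monomial_cons] using monomial_mem_homogeneous _

theorem cElem_mul (x : TwistedPlane q) : cElem q * x = ∑ a, X q a * (X q (Fin.rev a) * x) := by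
  simp only [cElem, Finset.sum_mul, mul_assoc]

theorem cElem_mul_mem_homogeneous {n : ℕ} {x : TwistedPlane q} (hx : x ∈ homogeneous q n) :
    cElem q * x ∈ homogeneous q (n + 2) := by
  rw [cElem_mul]
  exact Submodule.sum_mem _ fun a _ => X_mul_mem_homogeneous _ (X_mul_mem_homogeneous _ hx)

theorem adjoin_range_X : Algebra.adjoin ℂ (Set.range (X q)) = ⊤ := by
  rw [show Set.range (X q) = RingQuot.mkAlgHom ℂ (twistRel q) '' Set.range (FreeAlgebra.ι ℂ)
      from Set.range_comp _ _, Algebra.adjoin_image, FreeAlgebra.adjoin_range_ι, Algebra.map_top,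
    AlgHom.range_eq_top]
  exact RingQuot.mkAlgHom_surjective ℂ _

theorem span_range_monomial :
    Submodule.span ℂ (Set.range fun p : Σ n, Fin n → Fin N => monomial q p.2) = ⊤ := by
  have h := Algebra.adjoin_eq_span ℂ (Set.range (X q))
  rw [adjoin_range_X, Algebra.top_toSubmodule] at h
  rw [eq_top_iff, h, Submodule.span_le, ← FreeMonoid.mrange_lift]
  rintro _ ⟨l, rfl⟩
  refine Submodule.subset_span ⟨⟨_, l.toList.get⟩, ?_⟩
  simp [monomial, FreeMonoid.lift_apply]

end Monomials

structure IsTwist (q : Fin (N + 1) → Fin (N + 1) → ℂ) : Prop where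
  diag : ∀ a, q a a = 1
  mul_swap : ∀ a b, q a b * q b a = 1
  mul_rev : ∀ a b, q a b * q a (Fin.rev b) = 1
  rev_rev : ∀ a b, q a b = q (Fin.rev a) (Fin.rev b)

/-- The operators `D s` are the twisted partial derivatives `∂_s` of the paper. -/
structure IsTwistedPartials (q : Fin (N + 1) → Fin (N + 1) → ℂ)
    (D : Fin (N + 1) → Module.End ℂ (TwistedPlane q)) : Prop where
  map_one : ∀ s, D s 1 = 0
  map_X_mul : ∀ s a f, D s (X q a * f) = (if a = s then f else 0) + q a s • (X q a * D s f)

variable {q : Fin (N + 1) → Fin (N + 1) → ℂ}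

theorem IsTwist.self_rev (hq : IsTwist q) (a : Fin (N + 1)) : q a (Fin.rev a) = 1 := by
  simpa [hq.diag] using hq.mul_rev a a

theorem IsTwist.rev_self (hq : IsTwist q) (a : Fin (N + 1)) : q (Fin.rev a) a = 1 := by
  simpa using hq.self_rev (Fin.rev a)

theorem IsTwist.mul_rev_left (hq : IsTwist q) (a b : Fin (N + 1)) :
    q a b * q (Fin.rev a) b = 1 := by
  rw [hq.rev_rev (Fin.rev a), Fin.rev_rev]
  exact hq.mul_rev a b

variable {D : Fin (N + 1) → Module.End ℂ (TwistedPlane q)}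

theorem IsTwistedPartials.map_eq_zero_of_mem_homogeneous_zero (hD : IsTwistedPartials q D)
    (s : Fin (N + 1)) {x : TwistedPlane q} (hx : x ∈ homogeneous q 0) : D s x = 0 :=
  homogeneous_le (p := LinearMap.ker (D s)) |>.mpr (fun i => by simpa using hD.map_one s) hx

theorem IsTwistedPartials.map_monomial_mem_homogeneous (hD : IsTwistedPartials q D)
    (s : Fin (N + 1)) {n : ℕ} (i : Fin (n + 1) → Fin (N + 1)) :
    D s (monomial q i) ∈ homogeneous q n := by
  rw [monomial_succ, hD.map_X_mul]
  refine add_mem ?_ (Submodule.smul_mem _ _ ?_)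
  · split_ifs
    exacts [monomial_mem_homogeneous _, zero_mem _]
  · cases n with
    | zero => rw [monomial_zero, hD.map_one, mul_zero]; exact zero_mem _
    | succ n => exact X_mul_mem_homogeneous _ (hD.map_monomial_mem_homogeneous s (Fin.tail i))

theorem IsTwistedPartials.map_mem_homogeneous (hD : IsTwistedPartials q D) (s : Fin (N + 1))
    {n : ℕ} {x : TwistedPlane q} (hx : x ∈ homogeneous q (n + 1)) : D s x ∈ homogeneous q n :=
  homogeneous_le (p := (homogeneous q n).comap (D s)) |>.mpr (hD.map_monomial_mem_homogeneous s) hx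

theorem IsTwistedPartials.map_X_mul_X_rev (hq : IsTwist q) (hD : IsTwistedPartials q D)
    (s a : Fin (N + 1)) (x : TwistedPlane q) :
    D s (X q a * (X q (Fin.rev a) * x)) =
      ((if a = s then 1 else 0) + (if a = Fin.rev s then 1 else 0) : ℂ) • (X q (Fin.rev s) * x)
        + X q a * (X q (Fin.rev a) * D s x) := by
  rw [hD.map_X_mul, hD.map_X_mul, mul_add, mul_smul_comm, smul_add, smul_smul,
    hq.mul_rev_left, one_smul, add_smul, ← add_assoc]
  congr 2
  · split_ifs with h <;> simp [h]
  · rcases eq_or_ne a (Fin.rev s) with rfl | h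
    · simp [hq.rev_self]
    · simp [h, Fin.rev_eq_iff]

theorem IsTwistedPartials.map_cElem_mul (hq : IsTwist q) (hD : IsTwistedPartials q D)
    (s : Fin (N + 1)) (x : TwistedPlane q) :
    D s (cElem q * x) = (2 : ℂ) • (X q (Fin.rev s) * x) + cElem q * D s x := by
  simp only [cElem_mul, map_sum, hD.map_X_mul_X_rev hq, Finset.sum_add_distrib, ← Finset.sum_smul,
    Finset.sum_ite_eq', Finset.mem_univ, if_true]
  norm_num

noncomputable def euler (D : Fin (N + 1) → Module.End ℂ (TwistedPlane q)) :
    Module.End ℂ (TwistedPlane q) :=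
  ∑ s, LinearMap.mulLeft ℂ (X q s) * D s

theorem euler_apply (x : TwistedPlane q) : euler D x = ∑ s, X q s * D s x := by
  simp [euler]

theorem IsTwistedPartials.euler_X_mul (hq : IsTwist q) (hD : IsTwistedPartials q D)
    (a : Fin (N + 1)) (x : TwistedPlane q) :
    euler D (X q a * x) = X q a * x + X q a * euler D x := by
  have h : ∀ s, X q s * D s (X q a * x) =
      (if a = s then X q a * x else 0) + X q a * (X q s * D s x) := by
    intro s
    rw [hD.map_X_mul, mul_add, mul_smul_comm, ← mul_assoc, X_mul_X, smul_mul_assoc, smul_smul,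
      mul_comm, hq.mul_swap, one_smul, mul_assoc]
    split_ifs with h <;> simp [h]
  simp only [euler_apply, h, Finset.sum_add_distrib, Finset.sum_ite_eq, Finset.mem_univ, if_true,
    Finset.mul_sum]

theorem IsTwistedPartials.euler_monomial (hq : IsTwist q) (hD : IsTwistedPartials q D) :
    ∀ {n : ℕ} (i : Fin n → Fin (N + 1)), euler D (monomial q i) = (n : ℂ) • monomial q i
  | 0, i => by simp [euler_apply, hD.map_one]
  | n + 1, i => by
    rw [monomial_succ, hD.euler_X_mul hq, hD.euler_monomial hq, mul_smul_comm]
    push_cast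
    module

theorem IsTwistedPartials.euler_eq_smul_of_mem_homogeneous (hq : IsTwist q)
    (hD : IsTwistedPartials q D) {n : ℕ} {x : TwistedPlane q} (hx : x ∈ homogeneous q n) :
    euler D x = (n : ℂ) • x :=
  LinearMap.mem_eqLocus.mp <|
    homogeneous_le (p := LinearMap.eqLocus (euler D) ((n : ℂ) • LinearMap.id)) |>.mpr
      (hD.euler_monomial hq) hx

noncomputable def laplacian (D : Fin (N + 1) → Module.End ℂ (TwistedPlane q)) :
    Module.End ℂ (TwistedPlane q) :=
  ∑ j, D j * D (Fin.rev j)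

theorem laplacian_apply (x : TwistedPlane q) : laplacian D x = ∑ j, D j (D (Fin.rev j) x) := by
  simp [laplacian]

theorem IsTwistedPartials.laplacian_cElem_mul (hq : IsTwist q) (hD : IsTwistedPartials q D)
    (x : TwistedPlane q) :
    laplacian D (cElem q * x) =
      (2 * ((N : ℂ) + 1)) • x + (4 : ℂ) • euler D x + cElem q * laplacian D x := by
  have h : ∀ j, D j (D (Fin.rev j) (cElem q * x)) =
      (2 : ℂ) • x + (2 : ℂ) • (X q j * D j x)
        + (2 : ℂ) • (X q (Fin.rev j) * D (Fin.rev j) x) + cElem q * D j (D (Fin.rev j) x) := by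
    intro j
    rw [hD.map_cElem_mul hq, map_add, map_smul, Fin.rev_rev, hD.map_X_mul, if_pos rfl, hq.diag,
      one_smul, hD.map_cElem_mul hq]
    module
  have hrev : ∑ j, X q (Fin.rev j) * D (Fin.rev j) x = euler D x := by
    rw [euler_apply]
    exact Fintype.sum_equiv Fin.revPerm _ _ fun _ => rfl
  simp only [laplacian_apply, h, Finset.sum_add_distrib, ← Finset.smul_sum, ← Finset.mul_sum,
    hrev, ← euler_apply, Finset.sum_const, Finset.card_univ, Fintype.card_fin]
  rw [← Nat.cast_smul_eq_nsmul ℂ]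
  push_cast
  module

theorem IsTwistedPartials.laplacian_mem_homogeneous (hD : IsTwistedPartials q D) {n : ℕ}
    {x : TwistedPlane q} (hx : x ∈ homogeneous q (n + 2)) :
    laplacian D x ∈ homogeneous q n := by
  rw [laplacian_apply]
  exact Submodule.sum_mem _ fun j _ => hD.map_mem_homogeneous j (hD.map_mem_homogeneous _ hx)

theorem IsTwistedPartials.laplacian_eq_zero_of_mem_homogeneous_zero (hD : IsTwistedPartials q D)
    {x : TwistedPlane q} (hx : x ∈ homogeneous q 0) : laplacian D x = 0 := by
  simp [laplacian_apply, hD.map_eq_zero_of_mem_homogeneous_zero _ hx]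

theorem IsTwistedPartials.laplacian_pow_succ_cElem_mul (hq : IsTwist q)
    (hD : IsTwistedPartials q D) :
    ∀ {n : ℕ} {x : TwistedPlane q}, x ∈ homogeneous q (2 * n) →
      (laplacian D ^ (n + 1)) (cElem q * x) =
        (2 * ((n : ℂ) + 1) * ((N : ℂ) + 1 + 2 * n)) • (laplacian D ^ n) x
  | 0, x, hx => by
    rw [zero_add, pow_one, pow_zero, Module.End.one_apply, hD.laplacian_cElem_mul hq,
      hD.euler_eq_smul_of_mem_homogeneous hq hx, hD.laplacian_eq_zero_of_mem_homogeneous_zero hx]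
    simp only [mul_zero, Nat.cast_zero]
    module
  | n + 1, x, hx => by
    rw [pow_succ, Module.End.mul_apply, hD.laplacian_cElem_mul hq, map_add, map_add, map_smul,
      map_smul, hD.euler_eq_smul_of_mem_homogeneous hq hx,
      hD.laplacian_pow_succ_cElem_mul hq (hD.laplacian_mem_homogeneous (n := 2 * n) hx), map_smul,
      ← Module.End.mul_apply, ← pow_succ]
    push_cast
    module

/-- `1 / λ_t` in the notation of the paper. -/
def haarNormalizer (N t : ℕ) : ℂ :=
  2 ^ t * (t.factorial : ℂ) * ∏ k ∈ Finset.range t, ((N : ℂ) + 1 + 2 * k)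

theorem haarNormalizer_succ (N t : ℕ) :
    haarNormalizer N (t + 1) =
      2 * ((t : ℂ) + 1) * ((N : ℂ) + 1 + 2 * t) * haarNormalizer N t := by
  simp only [haarNormalizer, pow_succ, Nat.factorial_succ, Finset.prod_range_succ]
  push_cast
  ring

theorem haarNormalizer_ne_zero (N t : ℕ) : haarNormalizer N t ≠ 0 := by
  refine mul_ne_zero (mul_ne_zero (pow_ne_zero _ two_ne_zero) (mod_cast t.factorial_ne_zero))
    (Finset.prod_ne_zero_iff.mpr fun k _ => ?_)
  exact_mod_cast (by omega : N + 1 + 2 * k ≠ 0)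

theorem IsTwistedPartials.apply_cElem_mul_eq_of_laplacian_pow [Nontrivial (TwistedPlane q)]
    (hq : IsTwist q) (hD : IsTwistedPartials q D) {H : TwistedPlane q →ₗ[ℂ] ℂ}
    (hH : ∀ m, ∀ x ∈ homogeneous q (2 * m),
      (laplacian D ^ m) x = (haarNormalizer N m * H x) • 1)
    {t : ℕ} {x : TwistedPlane q} (hx : x ∈ homogeneous q (2 * t)) :
    H (cElem q * x) = H x := by
  have h := hD.laplacian_pow_succ_cElem_mul hq hx
  rw [hH (t + 1) _ (cElem_mul_mem_homogeneous hx), hH t _ hx, smul_smul, ← mul_assoc,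
    ← haarNormalizer_succ] at h
  exact mul_left_cancel₀ (haarNormalizer_ne_zero N (t + 1))
    (smul_left_injective ℂ (one_ne_zero : (1 : TwistedPlane q) ≠ 0) h)

end TwistedPlane

open TwistedPlane

/-- the functional `h_ℝ` on `ℝ_q^{N+1}`, vanishing on odd-degree
monomials and given on a degree-`2n` monomial by `λ_n Δ^n(x^{i_1}⋯x^{i_{2n}})`
with `λ_n = 1/(2^n n! (N+1)(N+3)⋯(N+2n−1))` (here `Δ^n` of a degree-`2n`
monomial is a scalar), vanishes on the ideal `(c−1)·ℝ_q^{N+1}`, hence descends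
to the twisted sphere `𝕊_q^N = ℝ_q^{N+1}/(c−1)`. -/
theorem haar_well_defined {N : ℕ} (q : Fin (N + 1) → Fin (N + 1) → ℂ)
    (h1 : ∀ a, q a a = 1)
    (h2 : ∀ a b, q a b * q b a = 1)
    (h3 : ∀ a b, q a b * q a (Fin.rev b) = 1)
    (h4 : ∀ a b, q a b = q (Fin.rev a) (Fin.rev b))
    (D : Fin (N + 1) → Module.End ℂ (TwistedPlane q))
    (hD1 : ∀ s, D s 1 = 0)
    (hD2 : ∀ s a f, D s (X q a * f) =
      (if a = s then f else 0) + q a s • (X q a * D s f))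
    (H : TwistedPlane q →ₗ[ℂ] ℂ)
    (Hodd : ∀ (m : ℕ) (i : Fin (2 * m + 1) → Fin (N + 1)),
      H ((List.ofFn fun k => X q (i k)).prod) = 0)
    (Heven : ∀ (m : ℕ) (i : Fin (2 * m) → Fin (N + 1)),
      ((∑ j, D j * D (Fin.rev j)) ^ m) ((List.ofFn fun k => X q (i k)).prod)
        = ((2 ^ m * (m.factorial : ℂ) * ∏ k ∈ Finset.range m, ((N : ℂ) + 1 + 2 * k))
            * H ((List.ofFn fun k => X q (i k)).prod)) • 1) :
    ∀ f : TwistedPlane q, H ((cElem q - 1) * f) = 0 := by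
  have hq : IsTwist q := ⟨h1, h2, h3, h4⟩
  have hD : IsTwistedPartials q D := ⟨hD1, hD2⟩
  have hodd : ∀ m, ∀ x ∈ homogeneous q (2 * m + 1), H x = 0 := fun m _ hx =>
    homogeneous_le (p := LinearMap.ker H) |>.mpr (Hodd m) hx
  have heven : ∀ m, ∀ x ∈ homogeneous q (2 * m),
      (laplacian D ^ m) x = (haarNormalizer N m * H x) • 1 := fun m _ hx =>
    LinearMap.mem_eqLocus.mp <| homogeneous_le
      (p := LinearMap.eqLocus (laplacian D ^ m) ((haarNormalizer N m • H).smulRight 1)) |>.mpr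
      (Heven m) hx
  intro f
  rcases subsingleton_or_nontrivial (TwistedPlane q) with _ | _
  · rw [Subsingleton.elim ((cElem q - 1) * f) 0, map_zero]
  have hc : ∀ n (i : Fin n → Fin (N + 1)), H (cElem q * monomial q i) = H (monomial q i) := by
    intro n i
    obtain ⟨t, rfl | rfl⟩ := Nat.even_or_odd' n
    · exact hD.apply_cElem_mul_eq_of_laplacian_pow hq heven (monomial_mem_homogeneous i)
    · rw [hodd t _ (monomial_mem_homogeneous i),
        hodd (t + 1) _ (cElem_mul_mem_homogeneous (monomial_mem_homogeneous i))]
  have hker : H ∘ₗ LinearMap.mulLeft ℂ (cElem q - 1) = 0 :=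
    LinearMap.ext_on_range span_range_monomial fun ⟨n, i⟩ => by simp [sub_mul, hc]
  exact LinearMap.congr_fun hker f
end
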